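/- arXiv:2002.06189 — 6 statements merged into one kernel-verified Lean document; each statement's English description precedes it below -/
import Mathlib

section
/- Let f₀ : ℝᵈ → ℝ be μ-strongly convex and ν-smooth, 0 < η < 1/ν, and let ρ_∞ be an invariant distribution of the Markov chain x_{k+1} = x_k - η∇f₀(x_k) + ηζ_k with i.i.d. bounded mean-zero noise ζ. If ρ_k denotes the law of x_k started from any initial law with finite second moment, then the 2-Wasserstein distance satisfies W₂(ρ_k, ρ_∞) ≤ (1-ημ)^k · C for some constant C ≥ 0 depending only on the initial law and ρ_∞. -/
/-!
Couple the chain with the stationary one by driving both with the same noise: the noise cancels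
in `x (k + 1) - y (k + 1)`, so it suffices that the gradient step `u ↦ u - η • ∇f₀ u` is a
`(1 - η μ)`-contraction. It is the gradient of `φ = ½‖·‖² - η f₀`, which is convex because
`η ν ≤ 1` and `(1 - η μ)`-smooth (`(1 - η μ)/2 ‖·‖² - φ = η (f₀ - μ/2 ‖·‖²)` is convex), and the
gradient of a convex `L`-smooth function is `L`-Lipschitz (Baillon–Haddad). Hence
`E‖x k - y k‖² ≤ (1 - η μ)^(2k) E‖x 0 - y 0‖²`, and the joint law of `(x k, y k)` is a coupling
of `ρ_k` and `ρ_∞`.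
-/

open MeasureTheory ProbabilityTheory RealInnerProductSpace

noncomputable def W2 {d : ℕ} (μ ν : Measure (EuclideanSpace ℝ (Fin d))) : ℝ :=
  Real.sqrt (sInf { r : ℝ |
    ∃ π : Measure (EuclideanSpace ℝ (Fin d) × EuclideanSpace ℝ (Fin d)),
      π.map Prod.fst = μ ∧ π.map Prod.snd = ν ∧ r = ∫ p, ‖p.1 - p.2‖ ^ 2 ∂π })

theorem half_mul_norm_sub_sq {E : Type*} [NormedAddCommGroup E] [InnerProductSpace ℝ E]
    (c : ℝ) (a z : E) :
    c / 2 * ‖z - a‖ ^ 2 = c / 2 * ‖z‖ ^ 2 - c / 2 * ‖a‖ ^ 2 - ⟪c • a, z - a⟫ := by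
  rw [real_inner_smul_left, inner_sub_right, real_inner_self_eq_norm_sq, norm_sub_sq_real,
    real_inner_comm]
  ring

section GradientConvexity

variable {E : Type*} [NormedAddCommGroup E] [InnerProductSpace ℝ E] [CompleteSpace E]
  {g h : E → ℝ} {G : E → E} {g' h' x : E}

theorem HasGradientAt.sub (hg : HasGradientAt g g' x) (hh : HasGradientAt h h' x) :
    HasGradientAt (fun u => g u - h u) (g' - h') x := by
  rw [hasGradientAt_iff_hasFDerivAt] at *
  simpa [map_sub] using hg.fun_sub hh

theorem HasGradientAt.const_mul (c : ℝ) (hg : HasGradientAt g g' x) :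
    HasGradientAt (fun u => c * g u) (c • g') x := by
  rw [hasGradientAt_iff_hasFDerivAt] at *
  simpa using hg.const_mul c

theorem hasGradientAt_half_mul_norm_sq (c : ℝ) (x : E) :
    HasGradientAt (fun u : E => c / 2 * ‖u‖ ^ 2) (c • x) x := by
  rw [hasGradientAt_iff_hasFDerivAt]
  refine ((hasStrictFDerivAt_norm_sq x).hasFDerivAt.const_mul (c / 2)).congr_fderiv ?_
  ext v
  simp only [smul_apply, coe_innerSL_apply, nsmul_eq_mul, Nat.cast_ofNat,
    smul_eq_mul, map_smul, InnerProductSpace.toDual_apply_apply]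
  ring

theorem HasGradientAt.hasDerivAt_add_smul {v : E} {t : ℝ} (hg : HasGradientAt g g' (x + t • v)) :
    HasDerivAt (fun s : ℝ => g (x + s • v)) ⟪g', v⟫ t := by
  have hline : HasDerivAt (fun s : ℝ => x + s • v) v t := by
    simpa using ((hasDerivAt_id t).smul_const v).const_add x
  simpa [Function.comp_def] using
    (hasGradientAt_iff_hasFDerivAt.mp hg).comp_hasDerivAt t hline

theorem ConvexOn.add_inner_le_of_hasGradientAt (hconv : ConvexOn ℝ Set.univ g)
    (hg : HasGradientAt g g' x) (y : E) : g x + ⟪g', y - x⟫ ≤ g y := by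
  have hline : ConvexOn ℝ Set.univ (fun s : ℝ => g (x + s • (y - x))) := by
    simpa [Function.comp_def, AffineMap.lineMap_apply, add_comm] using
      hconv.comp_affineMap (AffineMap.lineMap x y)
  have hslope := hline.le_slope_of_hasDerivAt (Set.mem_univ 0) (Set.mem_univ 1) one_pos
    (HasGradientAt.hasDerivAt_add_smul (by simpa using hg))
  simp only [slope_def_field, one_smul, add_sub_cancel, zero_smul, add_zero, sub_zero,
    div_one] at hslope
  linarith

theorem convexOn_univ_of_inner_gradient_sub_nonneg (hg : ∀ u, HasGradientAt g (G u) u)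
    (hmono : ∀ a b, 0 ≤ ⟪G a - G b, a - b⟫) : ConvexOn ℝ Set.univ g := by
  refine ⟨convex_univ, fun x _ y _ a b ha hb hab => ?_⟩
  have hderiv (t : ℝ) :
      HasDerivAt (fun s : ℝ => g (x + s • (y - x))) ⟪G (x + t • (y - x)), y - x⟫ t :=
    (hg _).hasDerivAt_add_smul
  have hline : ConvexOn ℝ Set.univ (fun s : ℝ => g (x + s • (y - x))) := by
    refine Monotone.convexOn_univ_of_deriv (fun t => (hderiv t).differentiableAt)
      fun s t hst => ?_
    rw [(hderiv s).deriv, (hderiv t).deriv]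
    have hst' := hmono (x + t • (y - x)) (x + s • (y - x))
    rw [show x + t • (y - x) - (x + s • (y - x)) = (t - s) • (y - x) by module,
      real_inner_smul_right, inner_sub_left] at hst'
    rcases hst.eq_or_lt with rfl | hlt
    · rfl
    · nlinarith
  have key := hline.2 (Set.mem_univ 0) (Set.mem_univ 1) ha hb hab
  rw [show a = 1 - b by linarith] at key ⊢
  simpa [show x + b • (y - x) = (1 - b) • x + b • y by module] using key

theorem ConvexOn.le_add_inner_add_half_mul_norm_sq {L : ℝ}
    (hsmooth : ConvexOn ℝ Set.univ (fun u => L / 2 * ‖u‖ ^ 2 - g u))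
    (hg : HasGradientAt g g' x) (z : E) :
    g z ≤ g x + ⟪g', z - x⟫ + L / 2 * ‖z - x‖ ^ 2 := by
  have := hsmooth.add_inner_le_of_hasGradientAt ((hasGradientAt_half_mul_norm_sq L x).sub hg) z
  rw [inner_sub_left, half_mul_norm_sub_sq] at *
  linarith

theorem ConvexOn.norm_sub_sq_le_of_hasGradientAt {L : ℝ} (hL : 0 < L)
    (hconv : ConvexOn ℝ Set.univ g)
    (hsmooth : ConvexOn ℝ Set.univ (fun u => L / 2 * ‖u‖ ^ 2 - g u))
    (hg : ∀ u, HasGradientAt g (G u) u) (a b : E) :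
    ‖G a - G b‖ ^ 2 ≤ 2 * L * (g a - g b - ⟪G b, a - b⟫) := by
  -- `z` is a gradient step from `a` for `u ↦ g u - ⟪G b, u⟫`, which is minimal at `b`
  set z := a - L⁻¹ • (G a - G b)
  have hlow := hconv.add_inner_le_of_hasGradientAt (hg b) z
  have hup := hsmooth.le_add_inner_add_half_mul_norm_sq (hg a) z
  rw [show z - b = (a - b) - L⁻¹ • (G a - G b) by module, inner_sub_right,
    real_inner_smul_right] at hlow
  rw [show z - a = -L⁻¹ • (G a - G b) by module, real_inner_smul_right, norm_smul,
    Real.norm_eq_abs, abs_neg, abs_inv, abs_of_pos hL] at hup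
  have hsq : ⟪G a, G a - G b⟫ - ⟪G b, G a - G b⟫ = ‖G a - G b‖ ^ 2 := by
    rw [← inner_sub_left, real_inner_self_eq_norm_sq]
  have hhalf : L / 2 * (L⁻¹ * ‖G a - G b‖) ^ 2 = L⁻¹ * ‖G a - G b‖ ^ 2 / 2 := by
    field_simp
  have key : L⁻¹ * ‖G a - G b‖ ^ 2 / 2 ≤ g a - g b - ⟪G b, a - b⟫ := by
    linear_combination hlow + hup + hhalf - L⁻¹ * hsq
  calc ‖G a - G b‖ ^ 2 = 2 * L * (L⁻¹ * ‖G a - G b‖ ^ 2 / 2) := by field_simp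
    _ ≤ 2 * L * (g a - g b - ⟪G b, a - b⟫) := by gcongr

theorem ConvexOn.norm_sub_le_of_hasGradientAt {L : ℝ} (hL : 0 < L)
    (hconv : ConvexOn ℝ Set.univ g)
    (hsmooth : ConvexOn ℝ Set.univ (fun u => L / 2 * ‖u‖ ^ 2 - g u))
    (hg : ∀ u, HasGradientAt g (G u) u) (a b : E) :
    ‖G a - G b‖ ≤ L * ‖a - b‖ := by
  have hab := hconv.norm_sub_sq_le_of_hasGradientAt hL hsmooth hg a b
  have hba := hconv.norm_sub_sq_le_of_hasGradientAt hL hsmooth hg b a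
  have hcocoercive : ‖G a - G b‖ ^ 2 ≤ L * ⟪G a - G b, a - b⟫ := by
    rw [norm_sub_rev, show b - a = -(a - b) by abel, inner_neg_right] at hba
    rw [inner_sub_left]
    linarith
  have hcs := real_inner_le_norm (G a - G b) (a - b)
  by_contra! hlt
  have hpos : 0 < ‖G a - G b‖ := lt_of_le_of_lt (by positivity) hlt
  nlinarith [mul_le_mul_of_nonneg_left hcs hL.le, mul_lt_mul_of_pos_right hlt hpos]

theorem norm_gradient_step_sub_le {f : E → ℝ} {μ η : ℝ} {K : NNReal} (hf : Differentiable ℝ f)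
    (hsc : ConvexOn ℝ Set.univ (fun x => f x - μ / 2 * ‖x‖ ^ 2))
    (hsm : LipschitzWith K (gradient f)) (hη : 0 ≤ η) (hηK : η * K ≤ 1) (hημ : η * μ < 1)
    (x y : E) :
    ‖(x - η • gradient f x) - (y - η • gradient f y)‖ ≤ (1 - η * μ) * ‖x - y‖ := by
  set φ : E → ℝ := fun u => 1 / 2 * ‖u‖ ^ 2 - η * f u
  have hφ (u : E) : HasGradientAt φ (u - η • gradient f u) u := by
    simpa [φ] using (hasGradientAt_half_mul_norm_sq 1 u).sub ((hf u).hasGradientAt.const_mul η)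
  have hconv : ConvexOn ℝ Set.univ φ := by
    refine convexOn_univ_of_inner_gradient_sub_nonneg hφ fun a b => ?_
    have hlip : ⟪gradient f a - gradient f b, a - b⟫ ≤ K * ‖a - b‖ ^ 2 :=
      (real_inner_le_norm _ _).trans (by nlinarith [hsm.norm_sub_le a b, norm_nonneg (a - b)])
    rw [show a - η • gradient f a - (b - η • gradient f b)
        = (a - b) - η • (gradient f a - gradient f b) by module,
      inner_sub_left, real_inner_smul_left, real_inner_self_eq_norm_sq]
    nlinarith [sq_nonneg ‖a - b‖]
  have hsmooth : ConvexOn ℝ Set.univ (fun u => (1 - η * μ) / 2 * ‖u‖ ^ 2 - φ u) := by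
    have heq : (fun u => (1 - η * μ) / 2 * ‖u‖ ^ 2 - φ u)
        = fun u => η • (f u - μ / 2 * ‖u‖ ^ 2) := by
      ext u
      simp only [φ, smul_eq_mul]
      ring
    exact heq ▸ hsc.smul hη
  exact hconv.norm_sub_le_of_hasGradientAt (by linarith) hsmooth hφ x y

end GradientConvexity

theorem norm_sub_le_pow_mul_of_lipschitz_step {F : Type*} [SeminormedAddCommGroup F]
    {T : F → F} {c : ℝ} (hc : 0 ≤ c) (hT : ∀ a b, ‖T a - T b‖ ≤ c * ‖a - b‖)
    {a b ξ : ℕ → F} (ha : ∀ k, a (k + 1) = T (a k) + ξ k) (hb : ∀ k, b (k + 1) = T (b k) + ξ k)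
    (k : ℕ) : ‖a k - b k‖ ≤ c ^ k * ‖a 0 - b 0‖ := by
  induction k with
  | zero => simp
  | succ k ih =>
    calc ‖a (k + 1) - b (k + 1)‖ = ‖T (a k) - T (b k)‖ := by
          rw [ha, hb, add_sub_add_right_eq_sub]
      _ ≤ c * ‖a k - b k‖ := hT _ _
      _ ≤ c * (c ^ k * ‖a 0 - b 0‖) := by gcongr
      _ = c ^ (k + 1) * ‖a 0 - b 0‖ := by ring

theorem sqrt_integral_norm_sq_le {Ω F : Type*} [MeasurableSpace Ω] {P : Measure Ω}
    [NormedAddCommGroup F] {X Y : Ω → F} {c : ℝ} (hc : 0 ≤ c) (hXY : ∀ ω, ‖X ω‖ ≤ c * ‖Y ω‖)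
    (hY : Integrable (fun ω => ‖Y ω‖ ^ 2) P) :
    √(∫ ω, ‖X ω‖ ^ 2 ∂P) ≤ c * √(∫ ω, ‖Y ω‖ ^ 2 ∂P) := by
  have hle : ∫ ω, ‖X ω‖ ^ 2 ∂P ≤ c ^ 2 * ∫ ω, ‖Y ω‖ ^ 2 ∂P := by
    rw [← integral_const_mul]
    refine integral_mono_of_nonneg (.of_forall fun ω => by positivity) (hY.const_mul _)
      (.of_forall fun ω => ?_)
    simpa [mul_pow] using pow_le_pow_left₀ (norm_nonneg _) (hXY ω) 2
  calc √(∫ ω, ‖X ω‖ ^ 2 ∂P) ≤ √(c ^ 2 * ∫ ω, ‖Y ω‖ ^ 2 ∂P) := Real.sqrt_le_sqrt hle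
    _ = c * √(∫ ω, ‖Y ω‖ ^ 2 ∂P) := by rw [Real.sqrt_mul (sq_nonneg c), Real.sqrt_sq hc]

theorem W2_map_le_sqrt_integral {Ω : Type*} [MeasurableSpace Ω] {P : Measure Ω} {d : ℕ}
    {X Y : Ω → EuclideanSpace ℝ (Fin d)} (hX : Measurable X) (hY : Measurable Y) :
    W2 (P.map X) (P.map Y) ≤ √(∫ ω, ‖X ω - Y ω‖ ^ 2 ∂P) := by
  have hXY : Measurable fun ω => (X ω, Y ω) := hX.prodMk hY
  have hcoupling : ∫ ω, ‖X ω - Y ω‖ ^ 2 ∂P ∈ { r : ℝ |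
      ∃ π : Measure (EuclideanSpace ℝ (Fin d) × EuclideanSpace ℝ (Fin d)),
        π.map Prod.fst = P.map X ∧ π.map Prod.snd = P.map Y ∧ r = ∫ p, ‖p.1 - p.2‖ ^ 2 ∂π } := by
    refine ⟨P.map fun ω => (X ω, Y ω), ?_, ?_, ?_⟩
    · rw [Measure.map_map measurable_fst hXY]; rfl
    · rw [Measure.map_map measurable_snd hXY]; rfl
    · rw [integral_map hXY.aemeasurable (by fun_prop)]
  refine Real.sqrt_le_sqrt (csInf_le ⟨0, ?_⟩ hcoupling)
  rintro r ⟨π, -, -, rfl⟩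
  exact integral_nonneg fun p => sq_nonneg _

theorem stmt_2_general (d : ℕ) (f₀ : EuclideanSpace ℝ (Fin d) → ℝ) (μ ν : ℝ)
    (hμν : μ ≤ ν)
    (hC2 : ContDiff ℝ 2 f₀)
    (hsc : ConvexOn ℝ Set.univ (fun x => f₀ x - μ / 2 * ‖x‖ ^ 2))
    (hsm : LipschitzWith (Real.toNNReal ν) (gradient f₀))
    (η : ℝ) (hη0 : 0 < η) (hη1 : η < 1 / ν)
    (Ω : Type*) [MeasureSpace Ω] (P : Measure Ω)
    (ζ : ℕ → Ω → EuclideanSpace ℝ (Fin d))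
    -- the chain started from an arbitrary initial law with finite second moment
    (x : ℕ → Ω → EuclideanSpace ℝ (Fin d))
    (hx : ∀ k ω, x (k + 1) ω = x k ω - η • gradient f₀ (x k ω) + η • ζ k ω)
    (hxmeas : ∀ k, Measurable (x k))
    (hx2 : Integrable (fun ω => ‖x 0 ω‖ ^ 2) P)
    -- ρ∞ is an invariant distribution: a stationary copy of the chain driven by the same noise
    (ρ_inf : Measure (EuclideanSpace ℝ (Fin d)))
    (y : ℕ → Ω → EuclideanSpace ℝ (Fin d))
    (hy : ∀ k ω, y (k + 1) ω = y k ω - η • gradient f₀ (y k ω) + η • ζ k ω)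
    (hymeas : ∀ k, Measurable (y k))
    (hy2 : Integrable (fun ω => ‖y 0 ω‖ ^ 2) P)
    (hyinv : ∀ k, Measure.map (y k) P = ρ_inf) :
    ∃ C : ℝ, 0 ≤ C ∧ ∀ k, W2 (Measure.map (x k) P) ρ_inf ≤ (1 - η * μ) ^ k * C := by
  have hν : 0 < ν := one_div_pos.mp (hη0.trans hη1)
  have hην : η * ν.toNNReal ≤ 1 := by
    rw [Real.coe_toNNReal ν hν.le]; exact ((lt_div_iff₀ hν).mp hη1).le
  have hημ : η * μ < 1 :=
    (mul_le_mul_of_nonneg_left hμν hη0.le).trans_lt ((lt_div_iff₀ hν).mp hη1)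
  have hstep := norm_gradient_step_sub_le (hC2.differentiable two_ne_zero) hsc hsm hη0.le hην hημ
  have hdist (k : ℕ) (ω : Ω) : ‖x k ω - y k ω‖ ≤ (1 - η * μ) ^ k * ‖x 0 ω - y 0 ω‖ :=
    norm_sub_le_pow_mul_of_lipschitz_step (a := (x · ω)) (b := (y · ω)) (ξ := (η • ζ · ω))
      (by linarith) hstep (fun k => hx k ω) (fun k => hy k ω) k
  have hL2 {X : Ω → EuclideanSpace ℝ (Fin d)} (hX : Measurable X) :=
    memLp_two_iff_integrable_sq_norm (μ := P) hX.aestronglyMeasurable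
  have hint0 : Integrable (fun ω => ‖x 0 ω - y 0 ω‖ ^ 2) P :=
    (hL2 ((hxmeas 0).sub (hymeas 0))).1 (((hL2 (hxmeas 0)).2 hx2).sub ((hL2 (hymeas 0)).2 hy2))
  refine ⟨√(∫ ω, ‖x 0 ω - y 0 ω‖ ^ 2 ∂P), Real.sqrt_nonneg _, fun k => ?_⟩
  calc W2 (P.map (x k)) ρ_inf ≤ √(∫ ω, ‖x k ω - y k ω‖ ^ 2 ∂P) := by
        rw [← hyinv k]; exact W2_map_le_sqrt_integral (hxmeas k) (hymeas k)
    _ ≤ (1 - η * μ) ^ k * √(∫ ω, ‖x 0 ω - y 0 ω‖ ^ 2 ∂P) :=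
        sqrt_integral_norm_sq_le (pow_nonneg (by linarith) k) (hdist k) hint0

/-- geometric ergodicity of the stochastic GD map in 2-Wasserstein distance:
`W₂(ρ_k, ρ_∞) ≤ (1-ημ)^k C`. -/
theorem stmt_2 (d : ℕ) (f₀ : EuclideanSpace ℝ (Fin d) → ℝ) (μ ν : ℝ)
    (hμ : 0 < μ) (hμν : μ ≤ ν)
    (hC2 : ContDiff ℝ 2 f₀)
    (hsc : ConvexOn ℝ Set.univ (fun x => f₀ x - μ / 2 * ‖x‖ ^ 2))
    (hsm : LipschitzWith (Real.toNNReal ν) (gradient f₀))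
    (η : ℝ) (hη0 : 0 < η) (hη1 : η < 1 / ν)
    (Ω : Type*) [MeasureSpace Ω] (P : Measure Ω) [IsProbabilityMeasure P]
    (ζ : ℕ → Ω → EuclideanSpace ℝ (Fin d))
    (hζmeas : ∀ k, Measurable (ζ k))
    (hζbdd : ∃ B : ℝ, ∀ k ω, ‖ζ k ω‖ ≤ B)
    (hζmean : ∀ k, ∫ ω, ζ k ω ∂P = 0)
    (hζindep : iIndepFun ζ P)
    (hζident : ∀ i j, Measure.map (ζ i) P = Measure.map (ζ j) P)
    -- the chain started from an arbitrary initial law with finite second moment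
    (x : ℕ → Ω → EuclideanSpace ℝ (Fin d))
    (hx : ∀ k ω, x (k + 1) ω = x k ω - η • gradient f₀ (x k ω) + η • ζ k ω)
    (hxmeas : ∀ k, Measurable (x k))
    (hx2 : Integrable (fun ω => ‖x 0 ω‖ ^ 2) P)
    -- ρ∞ is an invariant distribution: a stationary copy of the chain driven by the same noise
    (ρ_inf : Measure (EuclideanSpace ℝ (Fin d))) [IsProbabilityMeasure ρ_inf]
    (y : ℕ → Ω → EuclideanSpace ℝ (Fin d))
    (hy : ∀ k ω, y (k + 1) ω = y k ω - η • gradient f₀ (y k ω) + η • ζ k ω)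
    (hymeas : ∀ k, Measurable (y k))
    (hy2 : Integrable (fun ω => ‖y 0 ω‖ ^ 2) P)
    (hyinv : ∀ k, Measure.map (y k) P = ρ_inf) :
    ∃ C : ℝ, 0 ≤ C ∧ ∀ k, W2 (Measure.map (x k) P) ρ_inf ≤ (1 - η * μ) ^ k * C :=
  stmt_2_general d f₀ μ ν hμν hC2 hsc hsm η hη0 hη1 Ω P ζ x hx hxmeas hx2 ρ_inf y hy hymeas hy2
    hyinv
end

section
/- Let f₀ : ℝᵈ → ℝ be continuous with a unique global minimizer x₀, and suppose f₀(x) - f₀(x₀) ≥ C₁‖x - x₀‖^{k₁} and ‖∇f₀(x)‖ ≤ C₂‖x - x₀‖^{k₂} for all x, with constants C₁, C₂ > 0 and k₁, k₂ ≥ 1. If X follows the rescaled Gibbs distribution with density proportional to exp(-2f₀(x)/η), then E‖∇f₀(X)‖² = O(η^{(2k₂)/k₁}) as η → 0, i.e., there exist η₀ > 0 and K such that E‖∇f₀(X)‖² ≤ K·η^{2k₂/k₁} for all 0 < η < η₀. -/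
/-!
Pointwise, the growth bound gives
`‖∇f₀‖² e^{-2f₀/η} ≤ C₂² e^{-2f₀(x₀)/η} ‖x-x₀‖^{2k₂} e^{-2C₁‖x-x₀‖^{k₁}/η}`,
and rescaling `x - x₀` by `η^{1/k₁}` shows that the integral of the right side is
`e^{-2f₀(x₀)/η}` times a multiple of `η^{(2k₂+d)/k₁}`. In the other direction the mean value
theorem gives `f₀ - f₀(x₀) ≤ C₂‖x-x₀‖^{k₂+1}`, so on the ball of radius `η^{1/(k₂+1)}` around
`x₀` the weight `e^{-2f₀/η}` is at least `e^{-2f₀(x₀)/η - 2C₂}`, and the normalising integral is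
at least `e^{-2f₀(x₀)/η}` times a multiple of `η^{d/(k₂+1)}`. The factors `e^{-2f₀(x₀)/η}` cancel
in the ratio. Comparing the two bounds on `f₀ - f₀(x₀)` at large radii forces `k₁ ≤ k₂ + 1`, so
the exponent `(2k₂+d)/k₁ - d/(k₂+1)` of the ratio is at least `2k₂/k₁`, which suffices for
`η < 1`.
-/

open MeasureTheory Real Metric Module Filter

lemma le_of_forall_mul_rpow_le_mul_rpow {a b C₁ C₂ : ℝ} (hC₁ : 0 < C₁)
    (h : ∀ r : ℝ, 0 < r → C₁ * r ^ a ≤ C₂ * r ^ b) : a ≤ b := by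
  by_contra! hba
  obtain ⟨r, hr, hlarge⟩ := ((eventually_gt_atTop 0).and
    ((tendsto_rpow_atTop (sub_pos.2 hba)).eventually_gt_atTop (C₂ / C₁))).exists
  have hsmall : C₁ * r ^ (a - b) ≤ C₂ := by
    refine le_of_mul_le_mul_right ?_ (rpow_pos_of_pos hr b)
    rw [mul_assoc, ← rpow_add hr, sub_add_cancel]
    exact h r hr
  rw [div_lt_iff₀ hC₁] at hlarge
  linarith

section GibbsMeasure

variable {E : Type*} [NormedAddCommGroup E] {f : E → ℝ} {x₀ : E}

lemma exp_neg_two_mul_div_le {x : E} {C k η : ℝ} (hη : 0 < η)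
    (hgrowth : C * ‖x - x₀‖ ^ k ≤ f x - f x₀) :
    exp (-2 * f x / η) ≤ exp (-2 * f x₀ / η) * exp (-(2 * C / η) * ‖x - x₀‖ ^ k) := by
  rw [← exp_add, exp_le_exp,
    show -2 * f x₀ / η + -(2 * C / η) * ‖x - x₀‖ ^ k = -2 * (f x₀ + C * ‖x - x₀‖ ^ k) / η by
      ring]
  exact div_le_div_of_nonneg_right (by linarith) hη.le

variable [NormedSpace ℝ E]

lemma sub_le_mul_norm_sub_rpow_of_norm_fderiv_le {C k : ℝ}
    (hf : Differentiable ℝ f) (hC : 0 ≤ C) (hk : 0 ≤ k)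
    (hbound : ∀ x, ‖fderiv ℝ f x‖ ≤ C * ‖x - x₀‖ ^ k) (x : E) :
    f x - f x₀ ≤ C * ‖x - x₀‖ ^ (k + 1) := by
  have hball : ∀ y ∈ closedBall x₀ ‖x - x₀‖, ‖fderiv ℝ f y‖ ≤ C * ‖x - x₀‖ ^ k := fun y hy =>
    (hbound y).trans (by gcongr; rwa [mem_closedBall, dist_eq_norm] at hy)
  have hmvt := (convex_closedBall x₀ ‖x - x₀‖).norm_image_sub_le_of_norm_fderiv_le
    (fun y _ => hf y) hball (mem_closedBall_self (norm_nonneg _))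
    (by rw [mem_closedBall, dist_eq_norm])
  rw [rpow_add_one' (norm_nonneg _) (by linarith), ← mul_assoc]
  exact (le_abs_self _).trans hmvt

lemma exponent_le_of_rpow_growth_le [Nontrivial E] {C₁ C₂ k p : ℝ}
    (hC₁ : 0 < C₁) (hgrowth : ∀ x, C₁ * ‖x - x₀‖ ^ k ≤ f x - f x₀)
    (hupper : ∀ x, f x - f x₀ ≤ C₂ * ‖x - x₀‖ ^ p) : k ≤ p := by
  refine le_of_forall_mul_rpow_le_mul_rpow (C₂ := C₂) hC₁ fun r hr => ?_
  obtain ⟨v, hv⟩ := exists_norm_eq E hr.le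
  simpa [hv] using (hgrowth (x₀ + v)).trans (hupper (x₀ + v))

variable [FiniteDimensional ℝ E] [MeasurableSpace E] [BorelSpace E]
  (μ : Measure E) [μ.IsAddHaarMeasure]

lemma integrable_norm_rpow_mul_exp_neg_mul_rpow {q k b : ℝ} (hq : -1 < q) (hk : 0 < k)
    (hb : 0 < b) : Integrable (fun x : E => ‖x‖ ^ q * exp (-b * ‖x‖ ^ k)) μ := by
  rcases subsingleton_or_nontrivial E with hE | hE
  · exact Integrable.of_finite
  refine (integrable_fun_norm_addHaar μ (f := fun t => t ^ q * exp (-b * t ^ k))).2 ?_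
  refine (integrableOn_rpow_mul_exp_neg_mul_rpow (s := (finrank ℝ E - 1 : ℕ) + q) ?_ hk hb
    ).congr_fun (fun t ht => ?_) measurableSet_Ioi
  · linarith [(finrank ℝ E - 1).cast_nonneg (α := ℝ)]
  · dsimp only
    rw [smul_eq_mul, ← mul_assoc, rpow_add ht, rpow_natCast]

lemma integral_norm_rpow_mul_exp_neg_div_mul_rpow {q k b η : ℝ} (hk : 0 < k) (hη : 0 < η) :
    ∫ x : E, ‖x‖ ^ q * exp (-(b / η) * ‖x‖ ^ k) ∂μ =
      η ^ ((q + finrank ℝ E) / k) * ∫ x : E, ‖x‖ ^ q * exp (-b * ‖x‖ ^ k) ∂μ := by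
  set c := η ^ k⁻¹
  have hc : 0 < c := rpow_pos_of_pos hη _
  have hck : c ^ k = η := by rw [← rpow_mul hη.le, inv_mul_cancel₀ hk.ne', rpow_one]
  have hpt : ∀ x : E, ‖x‖ ^ q * exp (-(b / η) * ‖x‖ ^ k) =
      c ^ q * (‖c⁻¹ • x‖ ^ q * exp (-b * ‖c⁻¹ • x‖ ^ k)) := fun x => by
    rw [norm_smul, norm_inv, norm_of_nonneg hc.le, mul_rpow (by positivity) (norm_nonneg _),
      mul_rpow (by positivity) (norm_nonneg _), inv_rpow hc.le, inv_rpow hc.le, hck]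
    field_simp
  simp_rw [hpt]
  rw [integral_const_mul,
    Measure.integral_comp_inv_smul_of_nonneg μ (fun y => ‖y‖ ^ q * exp (-b * ‖y‖ ^ k)) hc.le,
    smul_eq_mul, ← mul_assoc, ← rpow_natCast, ← rpow_add hc, ← rpow_mul hη.le,
    div_eq_inv_mul (q + _)]

lemma integrable_gibbs {C k η : ℝ} (hf : Continuous f) (hC : 0 < C) (hk : 0 < k) (hη : 0 < η)
    (hgrowth : ∀ x, C * ‖x - x₀‖ ^ k ≤ f x - f x₀) :
    Integrable (fun x => exp (-2 * f x / η)) μ := by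
  have hdom := ((integrable_norm_rpow_mul_exp_neg_mul_rpow μ (q := 0) (by norm_num) hk
    (by positivity : 0 < 2 * C / η)).comp_sub_right x₀).const_mul (exp (-2 * f x₀ / η))
  refine hdom.mono' (by fun_prop) (ae_of_all _ fun x => ?_)
  rw [norm_of_nonneg (exp_pos _).le, rpow_zero, one_mul]
  exact exp_neg_two_mul_div_le hη (hgrowth x)

lemma integral_sq_norm_mul_gibbs_le {F : Type*} [NormedAddCommGroup F] {g : E → F}
    {C₁ C₂ k₁ k₂ η : ℝ} (hC₁ : 0 < C₁) (hk₁ : 0 < k₁) (hk₂ : 0 ≤ k₂) (hη : 0 < η)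
    (hgrowth : ∀ x, C₁ * ‖x - x₀‖ ^ k₁ ≤ f x - f x₀)
    (hg : ∀ x, ‖g x‖ ≤ C₂ * ‖x - x₀‖ ^ k₂) :
    ∫ x, ‖g x‖ ^ 2 * exp (-2 * f x / η) ∂μ ≤
      C₂ ^ 2 * exp (-2 * f x₀ / η) * (η ^ ((2 * k₂ + finrank ℝ E) / k₁) *
        ∫ y, ‖y‖ ^ (2 * k₂) * exp (-(2 * C₁) * ‖y‖ ^ k₁) ∂μ) := by
  set φ : E → ℝ := fun y => ‖y‖ ^ (2 * k₂) * exp (-(2 * C₁ / η) * ‖y‖ ^ k₁)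
  have hφ : Integrable φ μ :=
    integrable_norm_rpow_mul_exp_neg_mul_rpow μ (by linarith) hk₁ (by positivity)
  have hpt : ∀ x, ‖g x‖ ^ 2 * exp (-2 * f x / η) ≤
      C₂ ^ 2 * exp (-2 * f x₀ / η) * φ (x - x₀) := fun x => by
    have hsq : ‖g x‖ ^ 2 ≤ C₂ ^ 2 * ‖x - x₀‖ ^ (2 * k₂) := by
      rw [mul_comm 2 k₂, rpow_mul (norm_nonneg _), rpow_two, ← mul_pow]
      exact pow_le_pow_left₀ (norm_nonneg _) (hg x) 2
    calc ‖g x‖ ^ 2 * exp (-2 * f x / η)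
        ≤ C₂ ^ 2 * ‖x - x₀‖ ^ (2 * k₂) *
            (exp (-2 * f x₀ / η) * exp (-(2 * C₁ / η) * ‖x - x₀‖ ^ k₁)) :=
          mul_le_mul hsq (exp_neg_two_mul_div_le hη (hgrowth x)) (exp_pos _).le (by positivity)
      _ = C₂ ^ 2 * exp (-2 * f x₀ / η) * φ (x - x₀) := by ring
  calc ∫ x, ‖g x‖ ^ 2 * exp (-2 * f x / η) ∂μ
      ≤ ∫ x, C₂ ^ 2 * exp (-2 * f x₀ / η) * φ (x - x₀) ∂μ :=
        integral_mono_of_nonneg (ae_of_all _ fun x => by positivity)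
          ((hφ.comp_sub_right x₀).const_mul _) (ae_of_all _ hpt)
    _ = C₂ ^ 2 * exp (-2 * f x₀ / η) * ∫ y, φ y ∂μ := by
        rw [integral_const_mul, integral_sub_right_eq_self]
    _ = _ := by
        rw [integral_norm_rpow_mul_exp_neg_div_mul_rpow μ hk₁ hη]

lemma integral_gibbs_ge {C p η : ℝ} (hC : 0 ≤ C) (hp : 0 < p) (hη : 0 < η)
    (hupper : ∀ x, f x - f x₀ ≤ C * ‖x - x₀‖ ^ p)
    (hint : Integrable (fun x => exp (-2 * f x / η)) μ) :
    exp (-2 * f x₀ / η) * exp (-2 * C) * (η ^ (finrank ℝ E / p) * μ.real (closedBall 0 1)) ≤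
      ∫ x, exp (-2 * f x / η) ∂μ := by
  set ρ := η ^ p⁻¹
  have hρ : 0 < ρ := rpow_pos_of_pos hη _
  have hρp : ρ ^ p = η := by rw [← rpow_mul hη.le, inv_mul_cancel₀ hp.ne', rpow_one]
  have hball : ∀ x ∈ closedBall x₀ ρ,
      exp (-2 * f x₀ / η) * exp (-2 * C) ≤ exp (-2 * f x / η) := by
    intro x hx
    have hfx : f x - f x₀ ≤ C * η := by
      rw [mem_closedBall, dist_eq_norm] at hx
      calc f x - f x₀ ≤ C * ‖x - x₀‖ ^ p := hupper x
        _ ≤ C * ρ ^ p := by gcongr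
        _ = C * η := by rw [hρp]
    rw [← exp_add, exp_le_exp, show -2 * f x₀ / η + -2 * C = -2 * (f x₀ + C * η) / η by
      field_simp; ring]
    exact div_le_div_of_nonneg_right (by linarith) hη.le
  calc exp (-2 * f x₀ / η) * exp (-2 * C) * (η ^ (finrank ℝ E / p) * μ.real (closedBall 0 1))
      = exp (-2 * f x₀ / η) * exp (-2 * C) * μ.real (closedBall x₀ ρ) := by
        rw [Measure.addHaar_real_closedBall' μ x₀ hρ.le, ← rpow_natCast, ← rpow_mul hη.le,
          inv_mul_eq_div]
    _ ≤ ∫ x in closedBall x₀ ρ, exp (-2 * f x / η) ∂μ :=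
        setIntegral_ge_of_const_le_real measurableSet_closedBall measure_closedBall_lt_top.ne
          hball hint.integrableOn
    _ ≤ ∫ x, exp (-2 * f x / η) ∂μ :=
        setIntegral_le_integral hint (ae_of_all _ fun _ => (exp_pos _).le)

theorem gibbs_ratio_le_mul_rpow {F : Type*} [NormedAddCommGroup F] {g : E → F}
    {C₁ C₂ C k₁ k₂ p : ℝ} (hf : Continuous f) (hC₁ : 0 < C₁) (hC : 0 ≤ C) (hk₁ : 0 < k₁)
    (hk₂ : 0 ≤ k₂) (hp : 0 < p)
    (hgrowth : ∀ x, C₁ * ‖x - x₀‖ ^ k₁ ≤ f x - f x₀)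
    (hupper : ∀ x, f x - f x₀ ≤ C * ‖x - x₀‖ ^ p)
    (hg : ∀ x, ‖g x‖ ≤ C₂ * ‖x - x₀‖ ^ k₂) :
    ∃ K, 0 ≤ K ∧ ∀ η, 0 < η →
      (∫ x, ‖g x‖ ^ 2 * exp (-2 * f x / η) ∂μ) / (∫ x, exp (-2 * f x / η) ∂μ) ≤
        K * η ^ ((2 * k₂ + finrank ℝ E) / k₁ - finrank ℝ E / p) := by
  set A := ∫ y, ‖y‖ ^ (2 * k₂) * exp (-(2 * C₁) * ‖y‖ ^ k₁) ∂μ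
  set V := μ.real (closedBall (0 : E) 1)
  have hA : 0 ≤ A := integral_nonneg fun y => by positivity
  have hV : 0 < V :=
    ENNReal.toReal_pos (measure_closedBall_pos μ 0 one_pos).ne' measure_closedBall_lt_top.ne
  refine ⟨C₂ ^ 2 * A * exp (2 * C) / V, by positivity, fun η hη => ?_⟩
  calc (∫ x, ‖g x‖ ^ 2 * exp (-2 * f x / η) ∂μ) / (∫ x, exp (-2 * f x / η) ∂μ)
      ≤ C₂ ^ 2 * exp (-2 * f x₀ / η) * (η ^ ((2 * k₂ + finrank ℝ E) / k₁) * A) /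
          (exp (-2 * f x₀ / η) * exp (-2 * C) * (η ^ (finrank ℝ E / p) * V)) :=
        div_le_div₀ (by positivity) (integral_sq_norm_mul_gibbs_le μ hC₁ hk₁ hk₂ hη hgrowth hg)
          (by positivity) (integral_gibbs_ge μ hC hp hη hupper
            (integrable_gibbs μ hf hC₁ hk₁ hη hgrowth))
    _ = C₂ ^ 2 * A * exp (2 * C) / V * η ^ ((2 * k₂ + finrank ℝ E) / k₁ - finrank ℝ E / p) := by
        rw [rpow_sub hη, show exp (-2 * C) = (exp (2 * C))⁻¹ by rw [neg_mul, exp_neg]]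
        field_simp

end GibbsMeasure

theorem stmt_3_general (d : ℕ) (f₀ : EuclideanSpace ℝ (Fin d) → ℝ)
    (hC1f : ContDiff ℝ 1 f₀)
    (x₀ : EuclideanSpace ℝ (Fin d))
    (C₁ C₂ k₁ k₂ : ℝ) (hC₁ : 0 < C₁) (hC₂ : 0 < C₂) (hk₁ : 1 ≤ k₁) (hk₂ : 1 ≤ k₂)
    (hgrowth : ∀ x, C₁ * ‖x - x₀‖ ^ k₁ ≤ f₀ x - f₀ x₀)
    (hgrad : ∀ x, ‖gradient f₀ x‖ ≤ C₂ * ‖x - x₀‖ ^ k₂) :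
    ∃ η₀ > 0, ∃ K : ℝ, ∀ η : ℝ, 0 < η → η < η₀ →
      (∫ x, ‖gradient f₀ x‖ ^ 2 * Real.exp (-2 * f₀ x / η)) /
        (∫ x, Real.exp (-2 * f₀ x / η)) ≤ K * η ^ (2 * k₂ / k₁) := by
  -- `gradient f₀ x` is the Riesz representative of `fderiv ℝ f₀ x`, so the two have equal norms
  have hupper : ∀ x, f₀ x - f₀ x₀ ≤ C₂ * ‖x - x₀‖ ^ (k₂ + 1) :=
    sub_le_mul_norm_sub_rpow_of_norm_fderiv_le (hC1f.differentiable one_ne_zero) hC₂.le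
      (by linarith) fun x => (LinearIsometryEquiv.norm_map _ _).symm.trans_le (hgrad x)
  have hdim : (d : ℝ) / (k₂ + 1) ≤ d / k₁ := by
    rcases d.eq_zero_or_pos with rfl | hd
    · simp
    have : NeZero d := ⟨hd.ne'⟩
    gcongr
    exact exponent_le_of_rpow_growth_le hC₁ hgrowth hupper
  obtain ⟨K, hK, hratio⟩ := gibbs_ratio_le_mul_rpow volume hC1f.continuous hC₁ hC₂.le
    (by linarith) (by linarith) (by linarith) hgrowth hupper hgrad
  refine ⟨1, one_pos, K, fun η hη hη1 => (hratio η hη).trans ?_⟩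
  rw [finrank_euclideanSpace_fin, add_div]
  exact mul_le_mul_of_nonneg_left (rpow_le_rpow_of_exponent_ge hη hη1.le (by linarith)) hK

/-- under the growth bounds `f₀(x)-f₀(x₀) ≥ C₁‖x-x₀‖^{k₁}` and
`‖∇f₀(x)‖ ≤ C₂‖x-x₀‖^{k₂}`, if `X` follows the rescaled Gibbs law with density
`∝ exp(-2f₀/η)`, then `E‖∇f₀(X)‖² = O(η^{2k₂/k₁})` as `η → 0`. -/
theorem stmt_3 (d : ℕ) (f₀ : EuclideanSpace ℝ (Fin d) → ℝ)
    (hC1f : ContDiff ℝ 1 f₀)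
    (x₀ : EuclideanSpace ℝ (Fin d))
    (hmin : ∀ x, f₀ x₀ ≤ f₀ x)
    (huniq : ∀ x, f₀ x = f₀ x₀ → x = x₀)
    (C₁ C₂ k₁ k₂ : ℝ) (hC₁ : 0 < C₁) (hC₂ : 0 < C₂) (hk₁ : 1 ≤ k₁) (hk₂ : 1 ≤ k₂)
    (hgrowth : ∀ x, C₁ * ‖x - x₀‖ ^ k₁ ≤ f₀ x - f₀ x₀)
    (hgrad : ∀ x, ‖gradient f₀ x‖ ≤ C₂ * ‖x - x₀‖ ^ k₂)
    (hint : ∀ η : ℝ, 0 < η → Integrable (fun x => Real.exp (-2 * f₀ x / η)) volume)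
    (hint2 : ∀ η : ℝ, 0 < η →
      Integrable (fun x => ‖gradient f₀ x‖ ^ 2 * Real.exp (-2 * f₀ x / η)) volume) :
    ∃ η₀ > 0, ∃ K : ℝ, ∀ η : ℝ, 0 < η → η < η₀ →
      (∫ x, ‖gradient f₀ x‖ ^ 2 * Real.exp (-2 * f₀ x / η)) /
        (∫ x, Real.exp (-2 * f₀ x / η)) ≤ K * η ^ (2 * k₂ / k₁) :=
  stmt_3_general d f₀ hC1f x₀ C₁ C₂ k₁ k₂ hC₁ hC₂ hk₁ hk₂ hgrowth hgrad
end

section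
/- Let φ : J → J be a continuous map of a compact interval J ⊂ ℝ. If there exists a ∈ J such that, setting b = φ(a), c = φ(b), d = φ(c), either d ≤ a < b < c or d ≥ a > b > c holds, then φ has a periodic point of period 3. -/
/-!
Write `b = φ a`, `c = φ b` and suppose `φ c ≤ a < b < c`. As `φ` runs over `[b, c]` from `c` down to
`φ c ≤ a`, it crosses `[a, b]` on some `[γ, δ] ⊆ [b, c]` with `φ γ = b`, `φ δ = a`, and then crosses
`[γ, δ]` on some `[p, q] ⊆ [b, c]` with `φ p = δ`, `φ q = γ`. Hence `φ³ p = b ≤ p` and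
`φ³ q = c ≥ q`, so `φ³` has a fixed point `x ∈ [p, q]`, and `φ² x ∈ [a, b]`. If `x` were fixed by
`φ`, it would lie in `[a, b] ∩ [b, c] = {b}`; but `φ b = c ≠ b`. The case `φ c ≥ a > b > c` is
the same statement for the reversed order.
-/

open Set

section Covering

variable {α δ : Type*} [ConditionallyCompleteLinearOrder α] [TopologicalSpace α] [OrderTopology α]
  [DenselyOrdered α] [LinearOrder δ] [TopologicalSpace δ] [OrderClosedTopology δ]

theorem ContinuousOn.exists_mem_Icc_eq_forall_le {f : α → δ} {a b : α} {v : δ} (hab : a ≤ b)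
    (hf : ContinuousOn f (Icc a b)) (ha : v ≤ f a) (hb : f b ≤ v) :
    ∃ c ∈ Icc a b, f c = v ∧ ∀ x ∈ Icc c b, f x ≤ v := by
  set S := Icc a b ∩ f ⁻¹' {v}
  have hS : S.Nonempty := intermediate_value_Icc' hab hf ⟨hb, ha⟩
  have hSbdd : BddAbove S := ⟨b, fun x hx => hx.1.2⟩
  obtain ⟨hc, hfc⟩ : sSup S ∈ S :=
    (hf.preimage_isClosed_of_isClosed isClosed_Icc isClosed_singleton).csSup_mem hS hSbdd
  refine ⟨sSup S, hc, hfc, fun x hx => le_of_not_gt fun hvx => ?_⟩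
  obtain ⟨y, hy, hfy⟩ := intermediate_value_Icc' hx.2 (hf.mono (Icc_subset_Icc
    (hc.1.trans hx.1) le_rfl)) ⟨hb, hvx.le⟩
  have hyS : y ∈ S := ⟨⟨hc.1.trans (hx.1.trans hy.1), hy.2⟩, hfy⟩
  have hyx : y = x := le_antisymm ((le_csSup hSbdd hyS).trans hx.1) hy.1
  exact hvx.ne' (hyx ▸ hfy)

theorem ContinuousOn.exists_Icc_mapsTo_Icc {f : α → δ} {a b : α} {u v : δ} (hab : a ≤ b)
    (hf : ContinuousOn f (Icc a b)) (ha : v ≤ f a) (hb : f b ≤ u) (huv : u ≤ v) :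
    ∃ a' ∈ Icc a b, ∃ b' ∈ Icc a' b, f a' = v ∧ f b' = u ∧ MapsTo f (Icc a' b') (Icc u v) := by
  obtain ⟨a', ha', hfa', hle⟩ := hf.exists_mem_Icc_eq_forall_le hab ha (hb.trans huv)
  obtain ⟨b', hb', hfb', hge⟩ := ContinuousOn.exists_mem_Icc_eq_forall_le (α := αᵒᵈ) (δ := δᵒᵈ)
    (f := f) (a := b) (b := a') ha'.2 (hf.mono fun x hx => ⟨ha'.1.trans hx.2, hx.1⟩) hb
    (hfa' ▸ huv)
  exact ⟨a', ha', b', ⟨hb'.2, hb'.1⟩, hfa', hfb', fun x hx =>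
    ⟨hge x ⟨hx.2, hx.1⟩, hle x ⟨hx.1, hx.2.trans hb'.1⟩⟩⟩

end Covering

theorem exists_period_three_of_le_of_lt_of_lt {α : Type*} [ConditionallyCompleteLinearOrder α]
    [TopologicalSpace α] [OrderTopology α] [DenselyOrdered α] {φ : α → α} {a : α}
    (hφ : ContinuousOn φ (Icc a (φ (φ a)))) (hda : φ (φ (φ a)) ≤ a) (hab : a < φ a)
    (hbc : φ a < φ (φ a)) :
    ∃ x ∈ Icc (φ a) (φ (φ a)), φ (φ (φ x)) = x ∧ φ x ≠ x := by
  set b := φ a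
  set c := φ b
  have hφ_bc : ContinuousOn φ (Icc b c) := hφ.mono (Icc_subset_Icc hab.le le_rfl)
  obtain ⟨γ, hγ, δ, hδ, hφγ, hφδ, hmaps_γδ⟩ :=
    hφ_bc.exists_Icc_mapsTo_Icc hbc.le hbc.le hda hab.le
  have hγδ_sub : Icc γ δ ⊆ Icc b c := Icc_subset_Icc hγ.1 hδ.2
  obtain ⟨p, hp, q, hq, hφp, hφq, hmaps_pq⟩ :=
    hφ_bc.exists_Icc_mapsTo_Icc hbc.le hδ.2 (hda.trans (hab.le.trans hγ.1)) hδ.1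
  have hpq_sub : Icc p q ⊆ Icc b c := Icc_subset_Icc hp.1 hq.2
  have hφ3 : ContinuousOn (fun x => φ (φ (φ x))) (Icc p q) := by
    have hφ_ab : ContinuousOn φ (Icc a b) := hφ.mono (Icc_subset_Icc le_rfl hbc.le)
    have hφ_γδ : ContinuousOn φ (Icc γ δ) := hφ_bc.mono hγδ_sub
    exact hφ_ab.comp (hφ_γδ.comp (hφ_bc.mono hpq_sub) hmaps_pq) (hmaps_γδ.comp hmaps_pq)
  obtain ⟨x, hx, hx3⟩ : ∃ x ∈ uIcc q p, φ (φ (φ x)) = x := by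
    refine exists_mem_uIcc_isFixedPt (by rwa [uIcc_of_ge hq.1]) ?_ ?_
    · show q ≤ φ (φ (φ q))
      rw [hφq, hφγ]
      exact hq.2
    · show φ (φ (φ p)) ≤ p
      rw [hφp, hφδ]
      exact hp.1
  rw [uIcc_of_ge hq.1] at hx
  refine ⟨x, hpq_sub hx, hx3, fun hx1 => ?_⟩
  have hxa : φ (φ x) ≤ b := (hmaps_γδ (hmaps_pq hx)).2
  rw [hx1, hx1] at hxa
  have hxb : x = b := le_antisymm hxa (hpq_sub hx).1
  rw [hxb] at hx1
  exact hbc.ne' hx1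

theorem stmt_6_general (lo hi : ℝ) (φ : ℝ → ℝ)
    (hcont : ContinuousOn φ (Icc lo hi))
    (hmaps : MapsTo φ (Icc lo hi) (Icc lo hi))
    (a : ℝ) (ha : a ∈ Icc lo hi)
    (hpattern :
      (φ (φ (φ a)) ≤ a ∧ a < φ a ∧ φ a < φ (φ a)) ∨
      (a ≤ φ (φ (φ a)) ∧ φ (φ a) < φ a ∧ φ a < a)) :
    ∃ x ∈ Icc lo hi, φ (φ (φ x)) = x ∧ φ x ≠ x := by
  have hb := hmaps ha
  have hc := hmaps hb
  rcases hpattern with ⟨hda, hab, hbc⟩ | ⟨had, hcb, hba⟩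
  · obtain ⟨x, hx, hx3, hx1⟩ :=
      exists_period_three_of_le_of_lt_of_lt (hcont.mono (Icc_subset_Icc ha.1 hc.2)) hda hab hbc
    exact ⟨x, Icc_subset_Icc hb.1 hc.2 hx, hx3, hx1⟩
  · obtain ⟨x, hx, hx3, hx1⟩ := exists_period_three_of_le_of_lt_of_lt (α := ℝᵒᵈ) (φ := φ)
      (hcont.mono fun x hx => ⟨hc.1.trans hx.2, (show x ≤ a from hx.1).trans ha.2⟩) had hba hcb
    exact ⟨x, ⟨hc.1.trans hx.2, le_trans (α := ℝ) hx.1 hb.2⟩, hx3, hx1⟩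

/-- ("period 3" step of Li–Yorke) If a continuous self-map `φ` of a compact
interval `J = [lo, hi]` admits a point `a` with `b = φ a`, `c = φ b`, `d = φ c` satisfying
`d ≤ a < b < c` or `d ≥ a > b > c`, then `φ` has a periodic point of period 3. -/
theorem stmt_6 (lo hi : ℝ) (hle : lo ≤ hi) (φ : ℝ → ℝ)
    (hcont : ContinuousOn φ (Icc lo hi))
    (hmaps : MapsTo φ (Icc lo hi) (Icc lo hi))
    (a : ℝ) (ha : a ∈ Icc lo hi)
    (hpattern :
      (φ (φ (φ a)) ≤ a ∧ a < φ a ∧ φ a < φ (φ a)) ∨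
      (a ≤ φ (φ (φ a)) ∧ φ (φ a) < φ a ∧ φ a < a)) :
    ∃ x ∈ Icc lo hi, φ (φ (φ x)) = x ∧ φ x ≠ x :=
  stmt_6_general lo hi φ hcont hmaps a ha hpattern
end

section
/- Let f : ℝ → ℝ be C¹ with f' L-Lipschitz-bounded in the sense that |f'(x)| ≤ R + L|x| for some R, L ≥ 0, and suppose f'(x) → +∞ as x → +∞ and f'(x) → -∞ as x → -∞. Then for any 0 < η < 1/L there exists a compact interval J ⊂ ℝ such that the gradient descent map φ(x) = x - ηf'(x) satisfies φ(J) ⊆ J. -/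
open Set Filter

/-! Outside some `[-M, M]` the derivative has the sign of `x`, so a gradient step moves `x` towards
`0`; on `[-b, b]` a step has length at most `η (R + L b)`. Since `η L < 1`, this bound grows slower
than `b`, so `M + η (R + L b) ≤ b` for `b` large, and then `[-b, b]` is invariant. -/

lemma exists_sign_of_tendsto_atTop_of_tendsto_atBot {g : ℝ → ℝ} (htop : Tendsto g atTop atTop)
    (hbot : Tendsto g atBot atBot) :
    ∃ M, (∀ x, M ≤ x → 0 ≤ g x) ∧ (∀ x, x ≤ -M → g x ≤ 0) := by
  obtain ⟨M₁, hM₁⟩ := eventually_atTop.mp (htop.eventually_ge_atTop 0)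
  obtain ⟨M₂, hM₂⟩ := eventually_atBot.mp (hbot.eventually_le_atBot 0)
  exact ⟨max M₁ (-M₂), fun x hx => hM₁ x (le_of_max_le_left hx),
    fun x hx => hM₂ x (by linarith [le_max_right M₁ (-M₂)])⟩

lemma exists_nonneg_add_mul_le_self {a : ℝ} (c : ℝ) (ha : a < 1) :
    ∃ b, 0 ≤ b ∧ c + a * b ≤ b := by
  refine ⟨max 0 (c / (1 - a)), le_max_left _ _, ?_⟩
  have h1a : 0 < 1 - a := sub_pos.mpr ha
  have hc : c ≤ (1 - a) * max 0 (c / (1 - a)) :=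
    (div_le_iff₀' h1a).mp (le_max_right _ _)
  linarith

lemma mapsTo_sub_mul_Icc_neg {g : ℝ → ℝ} {η M K b : ℝ} (hη : 0 ≤ η)
    (hK : ∀ x ∈ Icc (-b) b, |g x| ≤ K) (hpos : ∀ x, M ≤ x → 0 ≤ g x)
    (hneg : ∀ x, x ≤ -M → g x ≤ 0) (hb : M + η * K ≤ b) :
    MapsTo (fun x => x - η * g x) (Icc (-b) b) (Icc (-b) b) := by
  intro x hx
  have hstep : |η * g x| ≤ η * K := by
    rw [abs_mul, abs_of_nonneg hη]
    exact mul_le_mul_of_nonneg_left (hK x hx) hη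
  obtain ⟨hstep_lo, hstep_hi⟩ := abs_le.mp hstep
  obtain ⟨hx_lo, hx_hi⟩ := hx
  constructor
  · rcases le_or_gt x (-M) with hxM | hxM
    · linarith [mul_nonpos_of_nonneg_of_nonpos hη (hneg x hxM)]
    · linarith
  · rcases le_or_gt M x with hxM | hxM
    · linarith [mul_nonneg hη (hpos x hxM)]
    · linarith

theorem stmt_7_general (f : ℝ → ℝ) (R L : ℝ)
    (hbnd : ∀ x, |deriv f x| ≤ R + L * |x|)
    (htop : Tendsto (deriv f) atTop atTop)
    (hbot : Tendsto (deriv f) atBot atBot)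
    (η : ℝ) (hη0 : 0 < η) (hη1 : η < 1 / L) :
    ∃ a b : ℝ, a ≤ b ∧ MapsTo (fun x => x - η * deriv f x) (Icc a b) (Icc a b) := by
  have hL : 0 < L := one_div_pos.mp (hη0.trans hη1)
  have hηL : η * L < 1 := (lt_div_iff₀ hL).mp hη1
  obtain ⟨M, hpos, hneg⟩ := exists_sign_of_tendsto_atTop_of_tendsto_atBot htop hbot
  obtain ⟨b, hb0, hb⟩ := exists_nonneg_add_mul_le_self (M + η * R) hηL
  have hK : ∀ x ∈ Icc (-b) b, |deriv f x| ≤ R + L * b := fun x hx =>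
    (hbnd x).trans (by gcongr; exact abs_le.mpr hx)
  refine ⟨-b, b, by linarith, mapsTo_sub_mul_Icc_neg hη0.le hK hpos hneg ?_⟩
  linarith

/-- for `f : ℝ → ℝ` C¹ with `|f'(x)| ≤ R + L|x|`, `f'(x) → ±∞` as `x → ±∞`,
and any step `0 < η < 1/L`, the gradient descent map `φ(x) = x - η f'(x)` leaves some
compact interval invariant. -/
theorem stmt_7 (f : ℝ → ℝ) (R L : ℝ) (hR : 0 ≤ R) (hL : 0 ≤ L)
    (hC1 : ContDiff ℝ 1 f)
    (hbnd : ∀ x, |deriv f x| ≤ R + L * |x|)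
    (htop : Tendsto (deriv f) atTop atTop)
    (hbot : Tendsto (deriv f) atBot atBot)
    (η : ℝ) (hη0 : 0 < η) (hη1 : η < 1 / L) :
    ∃ a b : ℝ, a ≤ b ∧ MapsTo (fun x => x - η * deriv f x) (Icc a b) (Icc a b) :=
  stmt_7_general f R L hbnd htop hbot η hη0 hη1
end

section
/- Let f₀ : ℝ → ℝ be C¹ with f₀'(x) = 4kx(x²-1), k > 3√3/8, and let ζ be a random variable with |ζ| ≤ 1 almost surely. Define the stochastic map x ↦ x - ηf₀'(x) + ηζ. Then the set S = {x : |f₀'(x)| ≤ 1} has (at least) two connected components S⁻ ⊂ (-∞,0) and S⁺ ⊂ (0,∞), and for sufficiently small η > 0, a trajectory started in S⁺ remains in S⁺'s basin almost surely: if x ∈ S⁺ then x - ηf₀'(x) + ηζ cannot lie in S⁻. -/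
/-!
At `x = ±1/√3` the gradient `f₀'(x) = 4kx(x² - 1)` has absolute value `8k/(3√3) > 1`, so these
two points lie outside `S`. Components of a subset of `ℝ` are intervals, hence the component of
`1` lies to the right of `1/√3` and that of `-1` to the left of `-1/√3`. One step of the noisy
map moves a point of `S` by at most `2η`, which for `η < 1/√3` cannot bridge the gap `2/√3`.
-/

open Set

section OrderClosedTopology

variable {α : Type*} [LinearOrder α] [TopologicalSpace α] [OrderClosedTopology α]
  {s : Set α} {a b : α}

theorem connectedComponentIn_subset_Ioi (ha : a ∉ s) (hab : a < b) :
    connectedComponentIn s b ⊆ Ioi a := by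
  intro x hx
  by_contra hxa
  have hb : b ∈ connectedComponentIn s b :=
    mem_connectedComponentIn (connectedComponentIn_nonempty_iff.1 ⟨x, hx⟩)
  have hmem : a ∈ connectedComponentIn s b :=
    isPreconnected_connectedComponentIn.Icc_subset hx hb ⟨not_lt.1 hxa, hab.le⟩
  exact ha (connectedComponentIn_subset s b hmem)

theorem connectedComponentIn_subset_Iio (ha : a ∉ s) (hba : b < a) :
    connectedComponentIn s b ⊆ Iio a :=
  connectedComponentIn_subset_Ioi (α := αᵒᵈ) ha hba

end OrderClosedTopology

theorem one_lt_abs_quartic_grad_of_sq_eq {k x : ℝ} (hk : 3 * Real.sqrt 3 / 8 < k)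
    (hx : x ^ 2 = 1 / 3) : 1 < |4 * k * x * (x ^ 2 - 1)| := by
  have hsqrt : Real.sqrt 3 * |x| = 1 := by
    have hsq : (Real.sqrt 3 * |x|) ^ 2 = 1 := by
      rw [mul_pow, sq_abs, hx, Real.sq_sqrt (by norm_num)]
      norm_num
    exact (pow_eq_one_iff_of_nonneg (by positivity) two_ne_zero).1 hsq
  have habs : |4 * k * x * (x ^ 2 - 1)| = 8 / 3 * k * |x| := by
    have hk0 : 0 < k := lt_trans (by positivity) hk
    rw [hx, show 4 * k * x * (1 / 3 - 1) = -(8 / 3 * k * x) by ring, abs_neg, abs_mul,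
      abs_of_pos (by positivity)]
  have hx0 : 0 < |x| := abs_pos.2 (by rintro rfl; norm_num at hx)
  calc (1 : ℝ) = 8 / 3 * (3 * Real.sqrt 3 / 8) * |x| := by linear_combination -hsqrt
    _ < 8 / 3 * k * |x| := by gcongr
    _ = |4 * k * x * (x ^ 2 - 1)| := habs.symm

theorem sub_two_mul_le_sub_mul_add_mul {x η g z : ℝ} (hη : 0 ≤ η) (hg : |g| ≤ 1)
    (hz : |z| ≤ 1) : x - 2 * η ≤ x - η * g + η * z := by
  have hg' : η * g ≤ η := by nlinarith [(abs_le.1 hg).2]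
  have hz' : -η ≤ η * z := by nlinarith [(abs_le.1 hz).1]
  linarith

/-- for `f₀(x) = k(x²-1)²` with `k > 3√3/8`, the set `S = {x : |f₀'(x)| ≤ 1}`
has connected components `S⁺ ∋ 1` contained in `(0,∞)` and `S⁻ ∋ -1` contained in `(-∞,0)`,
and for sufficiently small `η > 0` the bounded-noise stochastic map
`x ↦ x - ηf₀'(x) + ηζ` (with `|ζ| ≤ 1`) cannot send a point of `S⁺` into `S⁻`. -/
theorem stmt_9 (k : ℝ) (hk : 3 * Real.sqrt 3 / 8 < k) :
    let S : Set ℝ := {x : ℝ | |4 * k * x * (x ^ 2 - 1)| ≤ 1}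
    let Sp := connectedComponentIn S 1
    let Sm := connectedComponentIn S (-1)
    Sp ⊆ Ioi 0 ∧ Sm ⊆ Iio 0 ∧ Sp ≠ Sm ∧
      ∃ η₀ > 0, ∀ η z x : ℝ, 0 < η → η < η₀ → |z| ≤ 1 → x ∈ Sp →
        x - η * (4 * k * x * (x ^ 2 - 1)) + η * z ∉ Sm := by
  intro S Sp Sm
  set c : ℝ := Real.sqrt 3 / 3
  have hc0 : 0 < c := by positivity
  have hcsq : c ^ 2 = 1 / 3 := by
    rw [div_pow, Real.sq_sqrt (by norm_num)]
    norm_num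
  have hc1 : c < 1 := by nlinarith
  have hcS : c ∉ S := (one_lt_abs_quartic_grad_of_sq_eq hk hcsq).not_ge
  have hncS : -c ∉ S := (one_lt_abs_quartic_grad_of_sq_eq hk (by rw [neg_sq, hcsq])).not_ge
  have hSp : Sp ⊆ Ioi c := connectedComponentIn_subset_Ioi hcS hc1
  have hSm : Sm ⊆ Iio (-c) := connectedComponentIn_subset_Iio hncS (by linarith)
  have h1Sp : (1 : ℝ) ∈ Sp := mem_connectedComponentIn (by norm_num [S])
  refine ⟨hSp.trans (Ioi_subset_Ioi hc0.le), hSm.trans (Iio_subset_Iio (by linarith)),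
    fun hSpm => ?_, c, hc0, fun η z x hη hηc hz hx hy => ?_⟩
  · have : (1 : ℝ) < -c := hSm (hSpm ▸ h1Sp)
    linarith
  · have hstep := sub_two_mul_le_sub_mul_add_mul (x := x) hη.le
      (connectedComponentIn_subset S 1 hx) hz
    have hxc : c < x := hSp hx
    have hyc : _ < -c := hSm hy
    linarith
end

section
/- Let f₁ : ℝ → ℝ be C² and T-periodic with m := (1/T)∫₀^T ln|f₁''(y)| dy finite. Let f_{1,ε}(x) = ε f₁(x/ε). Then for any bounded interval Γ ⊂ ℝ with |Γ| > 0, E[ln|ε f_{1,ε}''(U_Γ)|] → m as ε → 0, where U_Γ is uniform on Γ. -/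
/-!
Writing `G` for a primitive of the periodic function `g` and `μ` for its mean over a period,
`G t - t • μ` is periodic and continuous, hence bounded. Substituting `x = ε y`,
`∫ x in a..b, g (x / ε) = ε • (G (b / ε) - G (a / ε))`, which differs from `(b - a) • μ` by
`ε` times a bounded quantity; dividing by `b - a` and letting `ε → 0` gives the limit `μ`.
-/

open MeasureTheory Filter intervalIntegral Topology

namespace Function.Periodic

protected lemma deriv {𝕜 F : Type*} [NontriviallyNormedField 𝕜] [NormedAddCommGroup F]
    [NormedSpace 𝕜 F] {f : 𝕜 → F} {c : 𝕜} (hf : Periodic f c) : Periodic (deriv f) c :=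
  fun x => by rw [← deriv_comp_add_const, hf.funext]

variable {E : Type*} [NormedAddCommGroup E] [NormedSpace ℝ E] {g : ℝ → E} {T : ℝ}

lemma periodic_primitive_sub_smul_average (hg : Periodic g T) (hT : T ≠ 0)
    (h_int : IntervalIntegrable g volume 0 T) :
    Periodic (fun t => (∫ x in 0..t, g x) - t • ⨍ x in 0..T, g x) T := by
  intro t
  have h_int' := hg.intervalIntegrable₀ hT h_int
  have h_period : (∫ x in 0..t + T, g x) - ∫ x in 0..t, g x = ∫ x in 0..T, g x := by
    rw [integral_interval_sub_left (h_int' 0 _) (h_int' 0 _)]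
    simpa using hg.intervalIntegral_add_eq t 0
  have h_mean : T • ⨍ x in 0..T, g x = ∫ x in 0..T, g x := by
    rw [interval_average_eq, sub_zero, smul_inv_smul₀ hT]
  dsimp only
  rw [add_smul, h_mean, ← h_period]
  abel

lemma tendsto_average_comp_div (hg : Periodic g T) (hT : T ≠ 0)
    (h_int : IntervalIntegrable g volume 0 T) {a b : ℝ} (hab : a ≠ b) :
    Tendsto (fun ε => ⨍ x in a..b, g (x / ε)) (𝓝[≠] 0) (𝓝 (⨍ x in 0..T, g x)) := by
  set μ := ⨍ x in 0..T, g x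
  set H : ℝ → E := fun t => (∫ x in 0..t, g x) - t • μ
  have h_int' := hg.intervalIntegrable₀ hT h_int
  obtain ⟨C, hC⟩ : ∃ C, ∀ t, ‖H t‖ ≤ C := by
    have hH_cont : Continuous H := (continuous_primitive h_int' 0).sub (by fun_prop)
    obtain ⟨C, hC⟩ := isBounded_iff_forall_norm_le.mp
      ((hg.periodic_primitive_sub_smul_average hT h_int).isBounded_of_continuous hT hH_cont)
    exact ⟨C, fun t => hC _ ⟨t, rfl⟩⟩
  have h_average : ∀ ε ≠ 0,
      ⨍ x in a..b, g (x / ε) = (b - a)⁻¹ • ε • (H (b / ε) - H (a / ε)) + μ := by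
    intro ε hε
    have hba : b - a ≠ 0 := sub_ne_zero.mpr hab.symm
    rw [interval_average_eq, integral_comp_div _ hε,
      ← integral_interval_sub_left (h_int' 0 _) (h_int' 0 _)]
    have hH : ε • (H (b / ε) - H (a / ε))
        = ε • ((∫ x in 0..b / ε, g x) - ∫ x in 0..a / ε, g x) - (b - a) • μ := by
      simp only [H]
      rw [sub_sub_sub_comm, ← sub_smul, smul_sub, smul_smul, mul_sub, mul_div_cancel₀ _ hε,
        mul_div_cancel₀ _ hε]
    rw [hH, smul_sub _ _ ((b - a) • μ), inv_smul_smul₀ hba, sub_add_cancel]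
  have h_error : Tendsto (fun ε : ℝ => ε • (H (b / ε) - H (a / ε))) (𝓝[≠] 0) (𝓝 0) :=
    (tendsto_nhdsWithin_of_tendsto_nhds tendsto_id).zero_smul_isBoundedUnder_le
      (isBoundedUnder_of ⟨C + C, fun ε => (norm_sub_le _ _).trans (add_le_add (hC _) (hC _))⟩)
  have h_lim := (h_error.const_smul (b - a)⁻¹).add_const μ
  rw [smul_zero, zero_add] at h_lim
  exact h_lim.congr' (eventually_nhdsWithin_of_forall fun ε hε => (h_average ε hε).symm)

end Function.Periodic

theorem stmt_11_general (f₁ : ℝ → ℝ) (T : ℝ) (hT : 0 < T)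
    (hper : Function.Periodic f₁ T)
    (hint : IntervalIntegrable (fun y => Real.log |deriv (deriv f₁) y|) volume 0 T)
    (m : ℝ) (hm : m = (1 / T) * ∫ y in (0:ℝ)..T, Real.log |deriv (deriv f₁) y|)
    (a b : ℝ) (hab : a < b) :
    Tendsto (fun ε : ℝ => (b - a)⁻¹ * ∫ x in a..b, Real.log |deriv (deriv f₁) (x / ε)|)
      (nhdsWithin 0 (Set.Ioi 0)) (nhds m) := by
  set g : ℝ → ℝ := fun y => Real.log |deriv (deriv f₁) y|
  have hg : Function.Periodic g T := fun x => by simp only [g, hper.deriv.deriv x]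
  have hm_average : m = ⨍ y in 0..T, g y := by
    rw [hm, interval_average_eq, sub_zero, smul_eq_mul, one_div]
  have h_lim := (hg.tendsto_average_comp_div hT.ne' hint hab.ne).mono_left
    (nhdsWithin_mono 0 fun ε (hε : ε ∈ Set.Ioi 0) => hε.ne')
  simpa only [interval_average_eq, smul_eq_mul, ← hm_average] using h_lim

/-- for `f₁` C² and `T`-periodic with `m = (1/T)∫₀^T ln|f₁''|` finite, and any
bounded interval `Γ = [a,b]` with positive length, the average of `ln|ε f_{1,ε}''| = ln|f₁''(·/ε)|`
over a uniform point of `Γ` converges to `m` as `ε → 0⁺`. -/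
theorem stmt_11 (f₁ : ℝ → ℝ) (T : ℝ) (hT : 0 < T)
    (hC2 : ContDiff ℝ 2 f₁) (hper : Function.Periodic f₁ T)
    (hint : IntervalIntegrable (fun y => Real.log |deriv (deriv f₁) y|) volume 0 T)
    (m : ℝ) (hm : m = (1 / T) * ∫ y in (0:ℝ)..T, Real.log |deriv (deriv f₁) y|)
    (a b : ℝ) (hab : a < b)
    (hintε : ∀ ε : ℝ, 0 < ε →
      IntervalIntegrable (fun x => Real.log |deriv (deriv f₁) (x / ε)|) volume a b) :
    Tendsto (fun ε : ℝ => (b - a)⁻¹ * ∫ x in a..b, Real.log |deriv (deriv f₁) (x / ε)|)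
      (nhdsWithin 0 (Set.Ioi 0)) (nhds m) :=
  stmt_11_general f₁ T hT hper hint m hm a b hab
end
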